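/- (Lemma 2.7, comparison principle.) Let h, l : [0,∞) → [0,∞) be continuous and let f, g : [0,∞) → [0,∞) be nondecreasing locally Lipschitz continuous functions. Let T > 0 and let u, v ∈ C([0,T], C_b(ℝ^N)) be solutions of problem (P) on [0,T] (with their respective initial data u(0) and v(0)). If u(0)(x) ≤ v(0)(x) for all x ∈ ℝ^N, then u(t)(x) ≤ v(t)(x) for all t ∈ [0,T] and all x ∈ ℝ^N. -/

import Mathlib

open MeasureTheory Real Set Metric Filter

noncomputable section

/-- `ℝ^N`. -/
abbrev EucN (N : ℕ) := EuclideanSpace ℝ (Fin N)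

/-- `C_b(ℝ^N)`, the bounded continuous functions with the sup norm. -/
abbrev CbN (N : ℕ) := BoundedContinuousFunction (EucN N) ℝ

/-- `u` is a (mild, nonnegative) solution of problem (P) on `[0,T]` with
initial data `u₀`, written pointwise via the kernel `Γ`. -/
def IsSolutionOnIcc (N : ℕ) (Γ : EucN N → EucN N → ℝ → ℝ)
    (h l f g : ℝ → ℝ) (u₀ : CbN N) (T : ℝ) (u : ℝ → CbN N) : Prop :=
  ContinuousOn u (Icc (0 : ℝ) T) ∧ u 0 = u₀ ∧
    (∀ t ∈ Icc (0 : ℝ) T, ∀ x, 0 ≤ u t x) ∧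
    ∀ t ∈ Ioc (0 : ℝ) T, ∀ x,
      u t x = (∫ y, Γ x y t * u₀ y) +
        ∫ σ in (0 : ℝ)..t, ∫ y, Γ x y (t - σ) *
          (h σ * f (u σ y) + l σ * g (u σ y))

/-!
Let `w(t) = ‖(u(t) - v(t))⁺‖_∞`. Subtracting the two Duhamel formulas, the initial terms compare
because `Γ ≥ 0`, and since `f, g` are nondecreasing and Lipschitz on the common range `[0, M]` of
`u, v`, the difference of the reaction terms at time `σ` is at most `C w(σ)`. As `Γ(x, ·, t - σ)` is
a probability density, integrating gives `u(t) - v(t) ≤ C ∫₀ᵗ w`, hence `w(t) ≤ C ∫₀ᵗ w`, and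
Grönwall's inequality forces `w ≡ 0`.
-/

theorem ContinuousOn.continuous_slice {X : Type*} [TopologicalSpace X] {G : ℝ → X → ℝ}
    {s : Set ℝ} (hG : ContinuousOn (fun p : ℝ × X => G p.1 p.2) (s ×ˢ univ)) {σ : ℝ}
    (hσ : σ ∈ s) : Continuous (G σ) :=
  hG.comp_continuous (Continuous.prodMk_right σ) fun y => ⟨hσ, mem_univ y⟩

theorem ContinuousOn.comp_bcf_apply {X : Type*} [TopologicalSpace X] {F : ℝ → ℝ → ℝ}
    {s t : Set ℝ} (hF : ContinuousOn (fun p : ℝ × ℝ => F p.1 p.2) (s ×ˢ t))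
    {u : ℝ → BoundedContinuousFunction X ℝ} (hu : ContinuousOn u s)
    (hut : ∀ σ ∈ s, ∀ y, u σ y ∈ t) :
    ContinuousOn (fun p : ℝ × X => F p.1 (u p.1 p.2)) (s ×ˢ univ) :=
  hF.comp (continuousOn_fst.prodMk (continuous_eval.comp_continuousOn
    ((hu.comp continuousOn_fst fun _ hp => hp.1).prodMk continuousOn_snd)))
    fun p hp => ⟨hp.1, hut p.1 hp.1 p.2⟩

theorem IsCompact.eventually_forall_le {X : Type*} [TopologicalSpace X] {s : Set X}
    (hs : IsCompact s) {f : X → ℝ} (hf : ContinuousOn f s) :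
    ∀ᶠ C in atTop, ∀ x ∈ s, f x ≤ C := by
  obtain ⟨C, hC⟩ := hs.bddAbove_image hf
  filter_upwards [eventually_ge_atTop C] with M hM x hx
  exact (hC (mem_image_of_mem f hx)).trans hM

namespace BoundedContinuousFunction

variable {X : Type*} [TopologicalSpace X]

theorem apply_le_norm_posPart (φ : BoundedContinuousFunction X ℝ) (y : X) : φ y ≤ ‖φ⁺‖ :=
  (le_posPart (φ y)).trans (φ⁺.apply_le_norm y)

theorem norm_posPart_le {φ : BoundedContinuousFunction X ℝ} {c : ℝ} (hc : 0 ≤ c)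
    (hφ : ∀ y, φ y ≤ c) : ‖φ⁺‖ ≤ c :=
  (norm_le hc).2 fun y => by
    rw [coe_posPart, Pi.posPart_apply, Real.norm_of_nonneg (posPart_nonneg (φ y))]
    exact sup_le (hφ y) hc

end BoundedContinuousFunction

theorem eq_zero_of_le_mul_integral {w : ℝ → ℝ} {a b C : ℝ} (hw : ContinuousOn w (Icc a b))
    (hw0 : ∀ t ∈ Icc a b, 0 ≤ w t) (hle : ∀ t ∈ Icc a b, w t ≤ C * ∫ s in a..t, w s) :
    ∀ t ∈ Icc a b, w t = 0 := by
  set W : ℝ → ℝ := fun r => ∫ s in a..r, w s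
  have hW0 : ∀ r ∈ Icc a b, 0 ≤ W r := fun r hr =>
    intervalIntegral.integral_nonneg hr.1 fun s hs => hw0 s ⟨hs.1, hs.2.trans hr.2⟩
  have hderiv : ∀ r ∈ Icc a b, HasDerivWithinAt W (w r) (Icc a b) r := by
    intro r hr
    have : Fact (r ∈ Icc a b) := ⟨hr⟩
    exact intervalIntegral.integral_hasDerivWithinAt_right
      ((hw.mono (uIcc_subset_Icc (left_mem_Icc.2 (hr.1.trans hr.2)) hr)).intervalIntegrable)
      (hw.stronglyMeasurableAtFilter_nhdsWithin measurableSet_Icc r) (hw r hr)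
  have hW : ∀ r ∈ Icc a b, W r = 0 :=
    eq_zero_of_abs_deriv_le_mul_abs_self_of_eq_zero_right
      (fun r hr => (hderiv r hr).continuousWithinAt)
      (fun r hr => (hderiv r (Ico_subset_Icc_self hr)).mono_of_mem_nhdsWithin
        (Icc_mem_nhdsGE_of_mem hr))
      intervalIntegral.integral_same
      (fun r hr => by
        rw [Real.norm_of_nonneg (hw0 r (Ico_subset_Icc_self hr)),
          Real.norm_of_nonneg (hW0 r (Ico_subset_Icc_self hr))]
        exact hle r (Ico_subset_Icc_self hr))
  intro t ht
  exact le_antisymm (by simpa [W, hW t ht] using hle t ht) (hw0 t ht)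

section ProbabilityDensity

variable {α : Type*} [MeasurableSpace α] {μ : Measure α} {k F : α → ℝ} {c : ℝ}

theorem integrable_mul_of_abs_le (hk : ∫ y, k y ∂μ = 1) (hF : AEStronglyMeasurable F μ)
    (hFc : ∀ y, |F y| ≤ c) : Integrable (fun y => k y * F y) μ :=
  (integrable_of_integral_eq_one hk).mul_bdd hF (ae_of_all _ hFc)

theorem integral_mul_le_of_le (hk0 : ∀ y, 0 ≤ k y) (hk : ∫ y, k y ∂μ = 1)
    (hkF : Integrable (fun y => k y * F y) μ) (hFc : ∀ y, F y ≤ c) :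
    ∫ y, k y * F y ∂μ ≤ c :=
  calc ∫ y, k y * F y ∂μ ≤ ∫ y, k y * c ∂μ :=
        integral_mono hkF ((integrable_of_integral_eq_one hk).mul_const c)
          fun y => mul_le_mul_of_nonneg_left (hFc y) (hk0 y)
    _ = c := by rw [integral_mul_const, hk, one_mul]

theorem abs_integral_mul_le (hk0 : ∀ y, 0 ≤ k y) (hk : ∫ y, k y ∂μ = 1)
    (hF : AEStronglyMeasurable F μ) (hFc : ∀ y, |F y| ≤ c) :
    |∫ y, k y * F y ∂μ| ≤ c := by
  have hneg : ∫ y, k y * -F y ∂μ ≤ c :=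
    integral_mul_le_of_le hk0 hk (integrable_mul_of_abs_le hk hF.neg (by simpa using hFc))
      fun y => (neg_le_abs (F y)).trans (hFc y)
  simp only [mul_neg, integral_neg] at hneg
  exact abs_le.2 ⟨by linarith,
    integral_mul_le_of_le hk0 hk (integrable_mul_of_abs_le hk hF hFc) fun y => le_of_abs_le (hFc y)⟩

end ProbabilityDensity

theorem MonotoneOn.sub_le_mul_of_lipschitzOnWith {f : ℝ → ℝ} {s : Set ℝ} {K : NNReal}
    (hmono : MonotoneOn f s) (hlip : LipschitzOnWith K f s) {a b d : ℝ} (ha : a ∈ s)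
    (hb : b ∈ s) (hd0 : 0 ≤ d) (hd : a - b ≤ d) : f a - f b ≤ K * d := by
  rcases le_total a b with hab | hab
  · have := hmono ha hb hab
    have : (0 : ℝ) ≤ K * d := by positivity
    linarith
  · calc f a - f b ≤ dist (f a) (f b) := le_abs_self _
      _ ≤ K * dist a b := hlip.dist_le_mul a ha b hb
      _ = K * (a - b) := by rw [Real.dist_eq, abs_of_nonneg (sub_nonneg.2 hab)]
      _ ≤ K * d := mul_le_mul_of_nonneg_left hd K.coe_nonneg

structure IsTransitionDensity {N : ℕ} (Γ : EucN N → EucN N → ℝ → ℝ) : Prop where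
  measurable : Measurable fun p : EucN N × EucN N × ℝ => Γ p.1 p.2.1 p.2.2
  nonneg : ∀ x y t, 0 < t → 0 ≤ Γ x y t
  integral_eq_one : ∀ x t, 0 < t → ∫ y, Γ x y t = 1

namespace IsTransitionDensity

variable {N : ℕ} {Γ : EucN N → EucN N → ℝ → ℝ} {x : EucN N} {t T B : ℝ}

theorem integrable_mul_bcf (hΓ : IsTransitionDensity Γ) (ht : 0 < t) (φ : CbN N) :
    Integrable (fun y => Γ x y t * φ y) :=
  integrable_mul_of_abs_le (hΓ.integral_eq_one x t ht) φ.continuous.aestronglyMeasurable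
    fun y => by simpa only [Real.norm_eq_abs] using φ.norm_coe_le_norm y

theorem intervalIntegrable_duhamel (hΓ : IsTransitionDensity Γ) {G : ℝ → EucN N → ℝ}
    (hG : ContinuousOn (fun p : ℝ × EucN N => G p.1 p.2) (Icc 0 T ×ˢ univ))
    (hB : ∀ σ ∈ Icc 0 T, ∀ y, |G σ y| ≤ B) (ht : t ∈ Ioc 0 T) :
    IntervalIntegrable (fun σ => ∫ y, Γ x y (t - σ) * G σ y) volume 0 t := by
  have hmeas : AEStronglyMeasurable (fun σ => ∫ y, Γ x y (t - σ) * G σ y)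
      (volume.restrict (Icc 0 T)) := by
    refine AEStronglyMeasurable.integral_prod_right'
      (f := fun p => Γ x p.2 (t - p.1) * G p.1 p.2) ?_
    rw [← Measure.restrict_univ (μ := (volume : Measure (EucN N))), Measure.prod_restrict,
      ← Measure.volume_eq_prod]
    have hΓσ : Measurable fun p : ℝ × EucN N => Γ x p.2 (t - p.1) := hΓ.measurable.comp
      (measurable_const.prodMk (measurable_snd.prodMk (measurable_const.sub measurable_fst)))
    exact hΓσ.aestronglyMeasurable.restrict.mul
      (hG.aestronglyMeasurable (measurableSet_Icc.prod MeasurableSet.univ))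
  have hIoo : Ioo 0 t ⊆ Icc 0 T := Ioo_subset_Icc_self.trans (Icc_subset_Icc_right ht.2)
  rw [intervalIntegrable_iff_integrableOn_Ioo_of_le ht.1.le]
  refine Integrable.of_bound (hmeas.mono_measure (Measure.restrict_mono hIoo le_rfl)) B
    (ae_restrict_of_forall_mem measurableSet_Ioo fun σ hσ => ?_)
  rw [Real.norm_eq_abs]
  exact abs_integral_mul_le (fun y => hΓ.nonneg x y _ (sub_pos.2 hσ.2))
    (hΓ.integral_eq_one x _ (sub_pos.2 hσ.2))
    (hG.continuous_slice (hIoo hσ)).aestronglyMeasurable (hB σ (hIoo hσ))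

theorem duhamel_sub_le (hΓ : IsTransitionDensity Γ) {G₁ G₂ : ℝ → EucN N → ℝ} {c : ℝ → ℝ}
    (hG₁ : ContinuousOn (fun p : ℝ × EucN N => G₁ p.1 p.2) (Icc 0 T ×ˢ univ))
    (hG₂ : ContinuousOn (fun p : ℝ × EucN N => G₂ p.1 p.2) (Icc 0 T ×ˢ univ))
    (hB₁ : ∀ σ ∈ Icc 0 T, ∀ y, |G₁ σ y| ≤ B) (hB₂ : ∀ σ ∈ Icc 0 T, ∀ y, |G₂ σ y| ≤ B)
    (hc : IntervalIntegrable c volume 0 t) (hle : ∀ σ ∈ Icc 0 T, ∀ y, G₁ σ y - G₂ σ y ≤ c σ)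
    (ht : t ∈ Ioc 0 T) :
    (∫ σ in 0..t, ∫ y, Γ x y (t - σ) * G₁ σ y) - (∫ σ in 0..t, ∫ y, Γ x y (t - σ) * G₂ σ y) ≤
      ∫ σ in 0..t, c σ := by
  have hI₁ := hΓ.intervalIntegrable_duhamel (x := x) hG₁ hB₁ ht
  have hI₂ := hΓ.intervalIntegrable_duhamel (x := x) hG₂ hB₂ ht
  rw [← intervalIntegral.integral_sub hI₁ hI₂]
  refine intervalIntegral.integral_mono_on_of_le_Ioo ht.1.le (hI₁.sub hI₂) hc fun σ hσ => ?_
  have hσT : σ ∈ Icc 0 T := ⟨hσ.1.le, hσ.2.le.trans ht.2⟩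
  have hs : 0 < t - σ := sub_pos.2 hσ.2
  have hk := hΓ.integral_eq_one x _ hs
  have h₁ := integrable_mul_of_abs_le hk (hG₁.continuous_slice hσT).aestronglyMeasurable
    (hB₁ σ hσT)
  have h₂ := integrable_mul_of_abs_le hk (hG₂.continuous_slice hσT).aestronglyMeasurable
    (hB₂ σ hσT)
  rw [← integral_sub h₁ h₂]
  simp only [← mul_sub]
  exact integral_mul_le_of_le (fun y => hΓ.nonneg x y _ hs) hk
    (by simpa only [mul_sub] using h₁.sub' h₂) (hle σ hσT)

end IsTransitionDensity

def reaction (h l f g : ℝ → ℝ) (σ r : ℝ) : ℝ := h σ * f r + l σ * g r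

theorem continuousOn_reaction {h l f g : ℝ → ℝ} {s t : Set ℝ} (hh : ContinuousOn h s)
    (hl : ContinuousOn l s) (hf : ContinuousOn f t) (hg : ContinuousOn g t) :
    ContinuousOn (fun p : ℝ × ℝ => reaction h l f g p.1 p.2) (s ×ˢ t) :=
  ((hh.comp continuousOn_fst fun _ hp => hp.1).mul (hf.comp continuousOn_snd fun _ hp => hp.2)).add
    ((hl.comp continuousOn_fst fun _ hp => hp.1).mul (hg.comp continuousOn_snd fun _ hp => hp.2))

theorem reaction_sub_le {h l f g : ℝ → ℝ} {s : Set ℝ} {Kf Kg : NNReal}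
    (hf : MonotoneOn f s) (hf' : LipschitzOnWith Kf f s)
    (hg : MonotoneOn g s) (hg' : LipschitzOnWith Kg g s) {σ a b d C : ℝ}
    (hh : h σ ∈ Icc 0 C) (hl : l σ ∈ Icc 0 C) (ha : a ∈ s) (hb : b ∈ s) (hd0 : 0 ≤ d)
    (hd : a - b ≤ d) :
    reaction h l f g σ a - reaction h l f g σ b ≤ C * (Kf + Kg) * d := by
  have hfd := hf.sub_le_mul_of_lipschitzOnWith hf' ha hb hd0 hd
  have hgd := hg.sub_le_mul_of_lipschitzOnWith hg' ha hb hd0 hd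
  calc reaction h l f g σ a - reaction h l f g σ b
        = h σ * (f a - f b) + l σ * (g a - g b) := by unfold reaction; ring
    _ ≤ C * (Kf * d) + C * (Kg * d) := add_le_add
        ((mul_le_mul_of_nonneg_left hfd hh.1).trans
          (mul_le_mul_of_nonneg_right hh.2 (by positivity)))
        ((mul_le_mul_of_nonneg_left hgd hl.1).trans
          (mul_le_mul_of_nonneg_right hl.2 (by positivity)))
    _ = C * (Kf + Kg) * d := by ring

namespace IsSolutionOnIcc

variable {N : ℕ} {Γ : EucN N → EucN N → ℝ → ℝ} {h l f g : ℝ → ℝ} {u₀ v₀ : CbN N} {T : ℝ}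
  {u v : ℝ → CbN N}

theorem eventually_mem_Icc (hu : IsSolutionOnIcc N Γ h l f g u₀ T u) :
    ∀ᶠ M in atTop, ∀ s ∈ Icc 0 T, ∀ y, u s y ∈ Icc 0 M :=
  (isCompact_Icc.eventually_forall_le (continuous_norm.comp_continuousOn hu.1)).mono
    fun _ hM s hs y => ⟨hu.2.2.1 s hs y, ((u s).apply_le_norm y).trans (hM s hs)⟩

theorem sub_le_integral (hΓ : IsTransitionDensity Γ) (hu : IsSolutionOnIcc N Γ h l f g u₀ T u)
    (hv : IsSolutionOnIcc N Γ h l f g v₀ T v) (h0 : ∀ x, u₀ x ≤ v₀ x) {M : ℝ}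
    (hF : ContinuousOn (fun p : ℝ × ℝ => reaction h l f g p.1 p.2) (Icc 0 T ×ˢ Icc 0 M))
    (hum : ∀ s ∈ Icc 0 T, ∀ y, u s y ∈ Icc 0 M) (hvm : ∀ s ∈ Icc 0 T, ∀ y, v s y ∈ Icc 0 M)
    {c : ℝ → ℝ} (hc : ContinuousOn c (Icc 0 T))
    (hle : ∀ σ ∈ Icc 0 T, ∀ y,
      reaction h l f g σ (u σ y) - reaction h l f g σ (v σ y) ≤ c σ) :
    ∀ t ∈ Icc 0 T, ∀ x, u t x - v t x ≤ ∫ σ in 0..t, c σ := by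
  obtain ⟨hu_cont, hu_init, -, hu_eq⟩ := hu
  obtain ⟨hv_cont, hv_init, -, hv_eq⟩ := hv
  intro t ht x
  rcases ht.1.eq_or_lt with rfl | ht0
  · simpa [hu_init, hv_init] using h0 x
  have ht' : t ∈ Ioc 0 T := ⟨ht0, ht.2⟩
  obtain ⟨B, hB⟩ := (isCompact_Icc.prod isCompact_Icc).exists_bound_of_continuousOn hF
  have hinit : ∫ y, Γ x y t * u₀ y ≤ ∫ y, Γ x y t * v₀ y :=
    integral_mono (hΓ.integrable_mul_bcf ht0 u₀) (hΓ.integrable_mul_bcf ht0 v₀) fun y =>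
      mul_le_mul_of_nonneg_left (h0 y) (hΓ.nonneg x y t ht0)
  have hduhamel := hΓ.duhamel_sub_le (x := x) (hF.comp_bcf_apply hu_cont hum)
    (hF.comp_bcf_apply hv_cont hvm) (fun σ hσ y => hB (σ, u σ y) ⟨hσ, hum σ hσ y⟩)
    (fun σ hσ y => hB (σ, v σ y) ⟨hσ, hvm σ hσ y⟩)
    (hc.mono (uIcc_subset_Icc (left_mem_Icc.2 (ht.1.trans ht.2)) ht)).intervalIntegrable
    hle ht'
  rw [hu_eq t ht' x, hv_eq t ht' x]
  unfold reaction at hduhamel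
  linarith

end IsSolutionOnIcc

theorem comparison_principle_general
    (N : ℕ) (α : ℝ)
    (Γ : EucN N → EucN N → ℝ → ℝ)
    (hΓmeas : Measurable fun p : EucN N × EucN N × ℝ => Γ p.1 p.2.1 p.2.2)
    (c₀ : ℝ)
    (hK1y : ∀ (x : EucN N) (t : ℝ), 0 < t → ∫ y, Γ x y t = 1)
    (hK5 : ∀ (x y : EucN N) (t : ℝ), 0 < t →
      0 < Γ x y t ∧ Γ x y t ≤ c₀ * t ^ (-(N : ℝ) / (2 - α)))
    (h l : ℝ → ℝ)
    (hhcont : ContinuousOn h (Ici 0)) (hlcont : ContinuousOn l (Ici 0))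
    (hhnn : ∀ t, 0 ≤ t → 0 ≤ h t) (hlnn : ∀ t, 0 ≤ t → 0 ≤ l t)
    (f g : ℝ → ℝ)
    (hfLip : ∀ M > (0 : ℝ), ∃ K : NNReal, LipschitzOnWith K f (Icc 0 M))
    (hgLip : ∀ M > (0 : ℝ), ∃ K : NNReal, LipschitzOnWith K g (Icc 0 M))
    (hfmono : MonotoneOn f (Ici 0)) (hgmono : MonotoneOn g (Ici 0))
    (T : ℝ) (u v : ℝ → CbN N)
    (hu : IsSolutionOnIcc N Γ h l f g (u 0) T u)
    (hv : IsSolutionOnIcc N Γ h l f g (v 0) T v)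
    (h0 : ∀ x, u 0 x ≤ v 0 x) :
    ∀ t ∈ Icc (0 : ℝ) T, ∀ x, u t x ≤ v t x := by
  have hΓ : IsTransitionDensity Γ := ⟨hΓmeas, fun x y t ht => (hK5 x y t ht).1.le, hK1y⟩
  have hh : ContinuousOn h (Icc 0 T) := hhcont.mono Icc_subset_Ici_self
  have hl : ContinuousOn l (Icc 0 T) := hlcont.mono Icc_subset_Ici_self
  obtain ⟨M, hM, hum, hvm⟩ :=
    ((eventually_gt_atTop 0).and (hu.eventually_mem_Icc.and hv.eventually_mem_Icc)).exists
  obtain ⟨C, hC, hhC, hlC⟩ := ((eventually_ge_atTop 0).and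
    ((isCompact_Icc.eventually_forall_le hh).and (isCompact_Icc.eventually_forall_le hl))).exists
  obtain ⟨Kf, hKf⟩ := hfLip M hM
  obtain ⟨Kg, hKg⟩ := hgLip M hM
  set w : ℝ → ℝ := fun s => ‖(u s - v s)⁺‖
  have hw : ContinuousOn w (Icc 0 T) :=
    (continuous_norm.comp (by fun_prop : Continuous fun φ : CbN N => φ⁺)).comp_continuousOn
      (hu.1.sub hv.1)
  have hkey := hu.sub_le_integral hΓ hv h0
    (continuousOn_reaction hh hl hKf.continuousOn hKg.continuousOn) hum hvm
    (continuousOn_const.mul hw) fun σ hσ y =>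
      reaction_sub_le (hfmono.mono Icc_subset_Ici_self) hKf (hgmono.mono Icc_subset_Ici_self)
        hKg ⟨hhnn σ hσ.1, hhC σ hσ⟩ ⟨hlnn σ hσ.1, hlC σ hσ⟩ (hum σ hσ y) (hvm σ hσ y)
        (norm_nonneg _) ((u σ - v σ).apply_le_norm_posPart y)
  have hw0 : ∀ t ∈ Icc 0 T, w t = 0 :=
    eq_zero_of_le_mul_integral hw (fun _ _ => norm_nonneg _) fun t ht => by
      rw [← intervalIntegral.integral_const_mul]
      exact BoundedContinuousFunction.norm_posPart_le
        (intervalIntegral.integral_nonneg ht.1 fun s _ => by positivity) (hkey t ht)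
  intro t ht x
  exact sub_nonpos.1 (((u t - v t).apply_le_norm_posPart x).trans_eq (hw0 t ht))

/-- Lemma 2.7: comparison principle. -/
theorem comparison_principle
    (N : ℕ) (hN : 1 ≤ N) (α : ℝ) (hα0 : 0 ≤ α) (hα1 : α < 1)
    (Γ : EucN N → EucN N → ℝ → ℝ)
    (hΓmeas : Measurable fun p : EucN N × EucN N × ℝ => Γ p.1 p.2.1 p.2.2)
    (c₀ : ℝ) (hc₀ : 0 < c₀)
    (hK1y : ∀ (x : EucN N) (t : ℝ), 0 < t → ∫ y, Γ x y t = 1)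
    (hK1x : ∀ (y : EucN N) (t : ℝ), 0 < t → ∫ x, Γ x y t = 1)
    (hK2 : ∀ (x y : EucN N) (s t : ℝ), 0 < s → s < t →
      Γ x y t = ∫ ξ, Γ x ξ (t - s) * Γ ξ y s)
    (hK5 : ∀ (x y : EucN N) (t : ℝ), 0 < t →
      0 < Γ x y t ∧ Γ x y t ≤ c₀ * t ^ (-(N : ℝ) / (2 - α)))
    (S : ℝ → CbN N → CbN N)
    (hS0 : ∀ φ, S 0 φ = φ)
    (hSΓ : ∀ (φ : CbN N) (t : ℝ), 0 < t → ∀ x, S t φ x = ∫ y, Γ x y t * φ y)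
    (hK4 : ∀ φ : CbN N, ContinuousOn (fun t => S t φ) (Ici (0 : ℝ)))
    (h l : ℝ → ℝ)
    (hhcont : ContinuousOn h (Ici 0)) (hlcont : ContinuousOn l (Ici 0))
    (hhnn : ∀ t, 0 ≤ t → 0 ≤ h t) (hlnn : ∀ t, 0 ≤ t → 0 ≤ l t)
    (f g : ℝ → ℝ)
    (hfLip : ∀ M > (0 : ℝ), ∃ K : NNReal, LipschitzOnWith K f (Icc 0 M))
    (hgLip : ∀ M > (0 : ℝ), ∃ K : NNReal, LipschitzOnWith K g (Icc 0 M))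
    (hfnn : ∀ s, 0 ≤ s → 0 ≤ f s) (hgnn : ∀ s, 0 ≤ s → 0 ≤ g s)
    (hfmono : MonotoneOn f (Ici 0)) (hgmono : MonotoneOn g (Ici 0))
    (T : ℝ) (hT : 0 < T) (u v : ℝ → CbN N)
    (hu : IsSolutionOnIcc N Γ h l f g (u 0) T u)
    (hv : IsSolutionOnIcc N Γ h l f g (v 0) T v)
    (h0 : ∀ x, u 0 x ≤ v 0 x) :
    ∀ t ∈ Icc (0 : ℝ) T, ∀ x, u t x ≤ v t x :=
  comparison_principle_general N α Γ hΓmeas c₀ hK1y hK5 h l hhcont hlcont hhnn hlnn f g hfLip hgLip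
    hfmono hgmono T u v hu hv h0
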